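/- arXiv:1203.2464 — 3 statements merged into one kernel-verified Lean document; each statement's English description precedes it below -/
import Mathlib

section
/- ∫₀^{π/2} E(sinφ) sin²φ dφ = (π²/8) · ₃F₂(-1/2, 1/2, 3/2; 1, 2; 1), where E is the complete elliptic integral of the second kind and ₃F₂ is the generalized hypergeometric function evaluated at 1. -/
/-!
Expand `√(1 - x) = ∑ cₙ xⁿ` with `cₙ = (-1/2)ₙ / n!`. Every coefficient after the first is
nonpositive, so `∑ |cₙ| xⁿ = 2 - √(1 - x) ≤ 2` on `[0, 1)`, the coefficients are absolutely
summable, and the expansion holds on all of `(-1, 1]` by Abel's theorem. This justifies integrating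
term by term twice: with the Wallis integrals `Wₙ = ∫₀^{π/2} sin²ⁿ θ dθ = (π/2) (1/2)ₙ / n!`,
`E(s) = ∑ cₙ Wₙ s²ⁿ`, hence `∫₀^{π/2} E(sin φ) sin² φ dφ = ∑ cₙ Wₙ Wₙ₊₁`. Since
`(1/2)ₙ₊₁ = (1/2) (3/2)ₙ` and `(n + 1)! = (2)ₙ`, the summand is `π²/8` times the `n`-th term of
`₃F₂(-1/2, 1/2, 3/2; 1, 2; 1)`.
-/

open Real

/-- The complete elliptic integral of the second kind. -/
noncomputable def ellipticE (ξ : ℝ) : ℝ :=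
  ∫ θ in (0:ℝ)..(π/2), Real.sqrt (1 - ξ ^ 2 * Real.sin θ ^ 2)

/-- The generalized hypergeometric function ₃F₂ evaluated at z, as a sum of
Pochhammer-symbol terms. -/
noncomputable def hyp3F2 (a₁ a₂ a₃ b₁ b₂ z : ℝ) : ℝ :=
  ∑' k : ℕ, ((ascPochhammer ℝ k).eval a₁ * (ascPochhammer ℝ k).eval a₂ *
      (ascPochhammer ℝ k).eval a₃) /
    ((ascPochhammer ℝ k).eval b₁ * (ascPochhammer ℝ k).eval b₂) * z ^ k / (Nat.factorial k)

open Filter Topology Set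

lemma ascPochhammer_succ_eval_left {S : Type*} [CommSemiring S] (n : ℕ) (x : S) :
    (ascPochhammer S (n + 1)).eval x = x * (ascPochhammer S n).eval (x + 1) := by
  simp [ascPochhammer_succ_left]

lemma ascPochhammer_eval_two (S : Type*) [Semiring S] (n : ℕ) :
    (ascPochhammer S n).eval 2 = (n + 1).factorial := by
  simpa [one_add_one_eq_two, add_comm 1 n] using factorial_mul_ascPochhammer S 1 n

lemma choose_mul_neg_one_pow {R : Type*} [Field R] [CharZero R] (a : R) (n : ℕ) :
    Ring.choose a n * (-1) ^ n = (ascPochhammer R n).eval (-a) / n.factorial := by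
  rw [Ring.choose_eq_smul, ascPochhammer_eval_neg_eq_descPochhammer, ← Polynomial.aeval_eq_smeval,
    ← Polynomial.eval_map_algebraMap, descPochhammer_map, smul_eq_mul]
  ring

theorem hasSum_one_sub_rpow (a : ℝ) {x : ℝ} (hx : |x| < 1) :
    HasSum (fun n => (ascPochhammer ℝ n).eval (-a) / n.factorial * x ^ n) ((1 - x) ^ a) := by
  have h := one_add_rpow_hasFPowerSeriesOnBall_zero (a := a) |>.hasSum
    (y := -x) (by simpa [enorm_eq_nnnorm, ← NNReal.coe_lt_coe] using hx)
  simp only [binomialSeries, FormalMultilinearSeries.ofScalars_apply_eq, zero_add, smul_eq_mul] at h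
  rw [← sub_eq_add_neg] at h
  refine h.congr_fun fun n => ?_
  rw [neg_pow, ← choose_mul_neg_one_pow]
  ring

lemma summable_of_hasSum_mul_pow_le {f : ℕ → ℝ} {g : ℝ → ℝ} {C : ℝ} (hf : ∀ n, 0 ≤ f n)
    (hg : ∀ x ∈ Ico (0:ℝ) 1, HasSum (fun n => f n * x ^ n) (g x))
    (hgC : ∀ x ∈ Ico (0:ℝ) 1, g x ≤ C) : Summable f := by
  refine summable_of_sum_range_le (c := C) hf fun N => ?_
  have hlim : Tendsto (fun x : ℝ => ∑ n ∈ Finset.range N, f n * x ^ n) (𝓝[<] 1)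
      (𝓝 (∑ n ∈ Finset.range N, f n)) := by
    simpa using ((continuous_finsetSum _ fun n _ => (continuous_pow n).const_mul (f n)).tendsto
      1).mono_left nhdsWithin_le_nhds
  refine le_of_tendsto hlim ?_
  filter_upwards [Ioo_mem_nhdsLT (zero_lt_one' ℝ)] with x hx
  have hx' : x ∈ Ico (0:ℝ) 1 := Ioo_subset_Ico_self hx
  exact (sum_le_hasSum _ (fun n _ => mul_nonneg (hf n) (pow_nonneg hx'.1 n)) (hg x hx')).trans
    (hgC x hx')

noncomputable def sqrtCoeff (n : ℕ) : ℝ := (ascPochhammer ℝ n).eval (-1/2) / n.factorial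

lemma sqrtCoeff_zero : sqrtCoeff 0 = 1 := by simp [sqrtCoeff]

lemma sqrtCoeff_nonpos {n : ℕ} (hn : n ≠ 0) : sqrtCoeff n ≤ 0 := by
  obtain ⟨m, rfl⟩ := Nat.exists_eq_succ_of_ne_zero hn
  have := ascPochhammer_pos m (1/2 : ℝ) one_half_pos
  rw [sqrtCoeff, ascPochhammer_succ_eval_left, show (-1/2 : ℝ) + 1 = 1/2 by norm_num]
  exact div_nonpos_of_nonpos_of_nonneg (by linarith) (Nat.cast_nonneg _)

lemma hasSum_sqrtCoeff_mul_pow_of_abs_lt {x : ℝ} (hx : |x| < 1) :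
    HasSum (fun n => sqrtCoeff n * x ^ n) (√(1 - x)) := by
  rw [sqrt_eq_rpow]
  convert hasSum_one_sub_rpow (1/2) hx using 4 with n
  norm_num [sqrtCoeff]

lemma summable_abs_sqrtCoeff : Summable fun n => |sqrtCoeff n| := by
  refine summable_of_hasSum_mul_pow_le (fun n => abs_nonneg _) (C := 2)
    (g := fun x => 2 - √(1 - x)) (fun x hx => ?_) (fun x _ => by simp [sqrt_nonneg])
  have hx' : |x| < 1 := abs_lt.2 ⟨by linarith [hx.1], hx.2⟩
  refine ((hasSum_ite_eq 0 (2:ℝ)).sub (hasSum_sqrtCoeff_mul_pow_of_abs_lt hx')).congr_fun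
    fun n => ?_
  rcases eq_or_ne n 0 with rfl | hn
  · norm_num [sqrtCoeff_zero]
  · simp [hn, abs_of_nonpos (sqrtCoeff_nonpos hn)]

theorem hasSum_sqrtCoeff_mul_pow {x : ℝ} (h0 : -1 < x) (h1 : x ≤ 1) :
    HasSum (fun n => sqrtCoeff n * x ^ n) (√(1 - x)) := by
  rcases h1.lt_or_eq with h1 | rfl
  · exact hasSum_sqrtCoeff_mul_pow_of_abs_lt (abs_lt.2 ⟨h0, h1⟩)
  have hsum := summable_abs_sqrtCoeff.of_abs
  have habel := Real.tendsto_tsum_powerSeries_nhdsWithin_lt hsum.hasSum.tendsto_sum_nat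
  have hsqrt : Tendsto (fun x : ℝ => ∑' n, sqrtCoeff n * x ^ n) (𝓝[<] 1) (𝓝 0) := by
    have : Tendsto (fun x : ℝ => √(1 - x)) (𝓝[<] 1) (𝓝 0) := by
      simpa using (((continuous_const (y := (1:ℝ))).sub continuous_id).sqrt.tendsto 1).mono_left
        (nhdsWithin_le_nhds (s := Iio 1))
    refine this.congr' ?_
    filter_upwards [Ioo_mem_nhdsLT (show (-1:ℝ) < 1 by norm_num)] with x hx
    exact (hasSum_sqrtCoeff_mul_pow_of_abs_lt (abs_lt.2 hx)).tsum_eq.symm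
  simpa [tendsto_nhds_unique habel hsqrt] using hsum.hasSum

noncomputable def wallis (n : ℕ) : ℝ := ∫ θ in (0:ℝ)..(π/2), sin θ ^ (2 * n)

theorem wallis_eq (n : ℕ) : wallis n = π / 2 * (ascPochhammer ℝ n).eval (1/2) / n.factorial := by
  induction n with
  | zero => simp [wallis]
  | succ n ih =>
    rw [wallis, mul_add, mul_one, integral_sin_pow, ← wallis, ih, ascPochhammer_succ_eval,
      Nat.factorial_succ]
    simp only [sin_zero, cos_pi_div_two, zero_pow (Nat.succ_ne_zero _), zero_mul, mul_zero,
      sub_zero, zero_div, zero_add]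
    push_cast
    field_simp
    ring

lemma abs_wallis_le (n : ℕ) : |wallis n| ≤ π / 2 := by
  rw [wallis]
  simpa [abs_of_pos (half_pos pi_pos)] using intervalIntegral.norm_integral_le_of_norm_le_const
    (a := 0) (b := π/2) (C := 1) (f := fun θ => sin θ ^ (2 * n))
    fun θ _ => by simpa using pow_le_one₀ (abs_nonneg _) (abs_sin_le_one θ)

theorem hasSum_intervalIntegral_of_abs_le {F : ℕ → ℝ → ℝ} {f : ℝ → ℝ} {C : ℕ → ℝ}
    (hF : ∀ n, Continuous (F n)) (hC : Summable C) (hFC : ∀ n t, |F n t| ≤ C n)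
    (hf : ∀ t, HasSum (fun n => F n t) (f t)) (a b : ℝ) :
    HasSum (fun n => ∫ t in a..b, F n t) (∫ t in a..b, f t) :=
  intervalIntegral.hasSum_integral_of_dominated_convergence (fun n _ => C n)
    (fun n => (hF n).aestronglyMeasurable) (fun n => MeasureTheory.ae_of_all _ fun t _ => hFC n t)
    (MeasureTheory.ae_of_all _ fun _ _ => hC) intervalIntegrable_const
    (MeasureTheory.ae_of_all _ fun t _ => hf t)

theorem hasSum_ellipticE {s : ℝ} (hs : |s| ≤ 1) :
    HasSum (fun n => sqrtCoeff n * wallis n * s ^ (2 * n)) (ellipticE s) := by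
  have hx : ∀ θ, s ^ 2 * sin θ ^ 2 ∈ Icc (0:ℝ) 1 := fun θ =>
    ⟨by positivity, mul_le_one₀ (sq_le_one_iff_abs_le_one s |>.2 hs) (sq_nonneg _) (sin_sq_le_one θ)⟩
  refine hasSum_intervalIntegral_of_abs_le (C := fun n => |sqrtCoeff n|)
    (F := fun n θ => sqrtCoeff n * (s ^ 2 * sin θ ^ 2) ^ n) (by fun_prop) summable_abs_sqrtCoeff
    (fun n θ => ?_) (fun θ => hasSum_sqrtCoeff_mul_pow (by linarith [(hx θ).1]) (hx θ).2) 0 (π/2)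
    |>.congr_fun fun n => ?_
  · rw [abs_mul, abs_of_nonneg (pow_nonneg (hx θ).1 n)]
    exact mul_le_of_le_one_right (abs_nonneg _) (pow_le_one₀ (hx θ).1 (hx θ).2)
  · simp_rw [wallis, mul_pow, ← pow_mul, intervalIntegral.integral_const_mul]
    ring

theorem hasSum_integral_ellipticE_sin_mul_sin_sq :
    HasSum (fun n => sqrtCoeff n * wallis n * wallis (n + 1))
      (∫ φ in (0:ℝ)..(π/2), ellipticE (sin φ) * sin φ ^ 2) := by
  refine hasSum_intervalIntegral_of_abs_le
    (F := fun n φ => sqrtCoeff n * wallis n * sin φ ^ (2 * (n + 1)))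
    (C := fun n => |sqrtCoeff n| * (π / 2)) (by fun_prop) (summable_abs_sqrtCoeff.mul_right _)
    (fun n φ => ?_) (fun φ => ?_) 0 (π/2) |>.congr_fun fun n => ?_
  · rw [abs_mul, abs_mul, abs_pow]
    exact mul_le_of_le_one_right (by positivity) (pow_le_one₀ (abs_nonneg _) (abs_sin_le_one φ))
      |>.trans (mul_le_mul_of_nonneg_left (abs_wallis_le n) (abs_nonneg _))
  · refine ((hasSum_ellipticE (abs_sin_le_one φ)).mul_right (sin φ ^ 2)).congr_fun fun n => ?_
    ring
  · simp [wallis, intervalIntegral.integral_const_mul]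

lemma sqrtCoeff_mul_wallis_mul_wallis_succ (n : ℕ) :
    sqrtCoeff n * wallis n * wallis (n + 1) =
      π ^ 2 / 8 * ((ascPochhammer ℝ n).eval (-1/2) * (ascPochhammer ℝ n).eval (1/2) *
        (ascPochhammer ℝ n).eval (3/2) / ((ascPochhammer ℝ n).eval 1 * (ascPochhammer ℝ n).eval 2) *
        1 ^ n / n.factorial) := by
  rw [wallis_eq, wallis_eq, ascPochhammer_succ_eval_left, ascPochhammer_eval_one,
    ascPochhammer_eval_two, sqrtCoeff, show (1/2 : ℝ) + 1 = 3/2 by norm_num]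
  have hn := n.factorial_ne_zero
  have hn1 := (n + 1).factorial_ne_zero
  field_simp
  ring

theorem stmt_2 :
    (∫ φ in (0:ℝ)..(π/2), ellipticE (Real.sin φ) * Real.sin φ ^ 2)
      = π ^ 2 / 8 * hyp3F2 (-1/2) (1/2) (3/2) 1 2 1 := by
  rw [← hasSum_integral_ellipticE_sin_mul_sin_sq.tsum_eq, hyp3F2, ← tsum_mul_left]
  exact tsum_congr sqrtCoeff_mul_wallis_mul_wallis_succ
end

section
/- ∫₀^{π/2} ∫₀^{π/2} sinθ sinφ · √(1 - cos²θ sin²φ) · sinφ dθ dφ = 2/3. -/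
/-!
The substitution `u = sin φ cos θ` turns the inner integral into
`sin φ * ∫₀^{sin φ} √(1 - u²) du = sin φ (sin φ cos φ + φ) / 2`, using the antiderivative
`(u √(1 - u²) + arcsin u) / 2` and `arcsin (sin φ) = φ`. The outer integrand then has the
elementary antiderivative `sin³ φ / 6 + (sin φ - φ cos φ) / 2`, which is `2 / 3` at `π / 2`.
-/

open Real Set intervalIntegral

theorem hasDerivAt_mul_sqrt_one_sub_sq_add_arcsin {x : ℝ} (hx : x ∈ Ioo (-1) 1) :
    HasDerivAt (fun x => (x * √(1 - x ^ 2) + arcsin x) / 2) (√(1 - x ^ 2)) x := by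
  have hpos : 0 < 1 - x ^ 2 := by nlinarith [hx.1, hx.2]
  have hsqrt : HasDerivAt (fun x => √(1 - x ^ 2)) (-(2 * x) / (2 * √(1 - x ^ 2))) x := by
    simpa using ((hasDerivAt_pow 2 x).const_sub 1).sqrt hpos.ne'
  have hne : √(1 - x ^ 2) ≠ 0 := (sqrt_pos.2 hpos).ne'
  refine ((((hasDerivAt_id' x).fun_mul hsqrt).fun_add
    (hasDerivAt_arcsin hx.1.ne' hx.2.ne)).div_const 2).congr_deriv ?_
  field_simp
  rw [sq_sqrt hpos.le]
  ring

theorem integral_sqrt_one_sub_sq_of_le {a b : ℝ} (ha : -1 ≤ a) (hab : a ≤ b) (hb : b ≤ 1) :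
    ∫ x in a..b, √(1 - x ^ 2) =
      (b * √(1 - b ^ 2) + arcsin b) / 2 - (a * √(1 - a ^ 2) + arcsin a) / 2 :=
  integral_eq_sub_of_hasDerivAt_of_le hab (by fun_prop)
    (fun x hx => hasDerivAt_mul_sqrt_one_sub_sq_add_arcsin
      ⟨by linarith [hx.1], by linarith [hx.2]⟩)
    ((by fun_prop : Continuous fun x : ℝ => √(1 - x ^ 2)).intervalIntegrable _ _)

theorem integral_sin_mul_sqrt_one_sub_cos_sq_mul_sq (s : ℝ) :
    ∫ θ in 0..π / 2, sin θ * s * √(1 - cos θ ^ 2 * s ^ 2) = ∫ x in 0..s, √(1 - x ^ 2) := by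
  have hsubst := integral_comp_mul_deriv (a := 0) (b := π / 2) (f := fun θ => s * cos θ)
    (f' := fun θ => -(s * sin θ)) (g := fun x => √(1 - x ^ 2))
    (fun θ _ => by simpa using (hasDerivAt_cos θ).const_mul s) (by fun_prop) (by fun_prop)
  simp only [Function.comp_apply, cos_zero, cos_pi_div_two, mul_zero, mul_one] at hsubst
  rw [integral_symm s 0, ← hsubst, ← integral_neg]
  congr 1 with θ
  ring_nf

theorem integral_sin_mul_sqrt_one_sub_cos_sq_mul_sin_sq {φ : ℝ} (hφ : φ ∈ Icc 0 (π / 2)) :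
    ∫ θ in 0..π / 2, sin θ * sin φ * √(1 - cos θ ^ 2 * sin φ ^ 2) * sin φ =
      sin φ * (sin φ * cos φ + φ) / 2 := by
  have hcos : √(1 - sin φ ^ 2) = cos φ := by
    rw [← cos_sq', sqrt_sq (cos_nonneg_of_mem_Icc ⟨by linarith [hφ.1, pi_pos], hφ.2⟩)]
  have hsin_nonneg : 0 ≤ sin φ := sin_nonneg_of_nonneg_of_le_pi hφ.1 (by linarith [hφ.2, pi_pos])
  simp only [integral_mul_const, integral_sin_mul_sqrt_one_sub_cos_sq_mul_sq,
    integral_sqrt_one_sub_sq_of_le (by norm_num) hsin_nonneg (sin_le_one φ), hcos,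
    arcsin_sin (by linarith [hφ.1, pi_pos]) hφ.2, zero_mul, arcsin_zero, add_zero, zero_div,
    sub_zero]
  ring

theorem integral_sin_mul_sin_mul_cos_add_id :
    ∫ φ in 0..π / 2, sin φ * (sin φ * cos φ + φ) / 2 = 2 / 3 := by
  have hderiv : ∀ φ ∈ uIcc 0 (π / 2),
      HasDerivAt (fun φ => sin φ ^ 3 / 6 + (sin φ - φ * cos φ) / 2)
        (sin φ * (sin φ * cos φ + φ) / 2) φ := fun φ _ => by
    refine ((((hasDerivAt_sin φ).fun_pow 3).div_const 6).fun_add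
      (((hasDerivAt_sin φ).fun_sub ((hasDerivAt_id' φ).fun_mul (hasDerivAt_cos φ))).div_const
        2)).congr_deriv ?_
    push_cast
    ring
  rw [integral_eq_sub_of_hasDerivAt hderiv (by apply Continuous.intervalIntegrable; fun_prop)]
  norm_num

theorem stmt_4 :
    (∫ φ in (0:ℝ)..(π/2), ∫ θ in (0:ℝ)..(π/2),
      Real.sin θ * Real.sin φ * Real.sqrt (1 - Real.cos θ ^ 2 * Real.sin φ ^ 2) *
        Real.sin φ) = 2 / 3 := by
  rw [← integral_sin_mul_sin_mul_cos_add_id]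
  refine integral_congr fun φ hφ => ?_
  rw [uIcc_of_le (by positivity)] at hφ
  exact integral_sin_mul_sqrt_one_sub_cos_sq_mul_sin_sq hφ
end

section
/- If (x,y,z) is uniformly distributed on the unit sphere in ℝ³, then E((|x|+|y|+|z|)²) = 1 + 4/π. -/
open Real MeasureTheory Metric

/-- The uniform probability measure on the unit sphere in ℝ³. -/
noncomputable def sphereUniform :
    Measure (sphere (0 : EuclideanSpace ℝ (Fin 3)) 1) :=
  ((volume : Measure (EuclideanSpace ℝ (Fin 3))).toSphere Set.univ)⁻¹ •
    (volume : Measure (EuclideanSpace ℝ (Fin 3))).toSphere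

/-!
Integrating a positively homogeneous function against the Gaussian `exp (-‖x‖²)` in polar
coordinates splits it into its integral over the unit sphere times a one-dimensional Gamma
integral. For a monomial `∏ |xᵢ| ^ aᵢ` the Gaussian integral also factorises over the
coordinates, which gives `∫_S ∏ |uᵢ| ^ aᵢ = 2 ∏ Γ((aᵢ + 1)/2) / Γ((n + ∑ aᵢ)/2)`.
On the unit sphere of ℝ³, `(|x| + |y| + |z|)² = 1 + 2 (|x||y| + |x||z| + |y||z|)`; each cross
term integrates to `8/3` and the sphere has area `4π`, so the mean is `(4π + 16) / 4π`.
-/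

open Set Module

section Polar

variable {E : Type*} [NormedAddCommGroup E] [NormedSpace ℝ E] [Nontrivial E]
  [FiniteDimensional ℝ E] [MeasurableSpace E] [BorelSpace E]
  (μ : Measure E) [μ.IsAddHaarMeasure]

theorem integral_mul_fun_norm_of_homogeneous {f : E → ℝ} {k : ℕ}
    (hf : ∀ x, ∀ r : ℝ, 0 < r → f (r • x) = r ^ k * f x) (g : ℝ → ℝ) :
    ∫ x, f x * g ‖x‖ ∂μ =
      (∫ u, f u ∂μ.toSphere) * ∫ r in Ioi (0 : ℝ), r ^ (finrank ℝ E - 1 + k) * g r := by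
  have hpolar : ∀ x : ({0}ᶜ : Set E), f x * g ‖(x : E)‖ =
      f (homeomorphUnitSphereProd E x).1 *
        (((homeomorphUnitSphereProd E x).2 : ℝ) ^ k * g (homeomorphUnitSphereProd E x).2) := by
    rintro ⟨x, hx⟩
    have hx : 0 < ‖x‖ := norm_pos_iff.2 hx
    simp only [homeomorphUnitSphereProd_apply_fst_coe, homeomorphUnitSphereProd_apply_snd_coe]
    rw [← mul_assoc, mul_comm (f (‖x‖⁻¹ • x)), ← hf _ _ hx, smul_inv_smul₀ hx.ne']
  calc ∫ x, f x * g ‖x‖ ∂μ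
      = ∫ x : ({0}ᶜ : Set E), f x * g ‖(x : E)‖ ∂(μ.comap Subtype.val) := by
        rw [integral_subtype_comap (measurableSet_singleton 0).compl (fun x ↦ f x * g ‖x‖),
          restrict_compl_singleton]
    _ = ∫ p : sphere (0 : E) 1 × Ioi (0 : ℝ), f p.1 * ((p.2 : ℝ) ^ k * g p.2)
          ∂(μ.toSphere.prod (Measure.volumeIoiPow (finrank ℝ E - 1))) := by
        rw [← μ.measurePreserving_homeomorphUnitSphereProd.integral_comp
          (Homeomorph.measurableEmbedding _)]
        exact integral_congr_ae (.of_forall hpolar)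
    _ = (∫ u, f u ∂μ.toSphere) *
          ∫ r : Ioi (0 : ℝ), (r : ℝ) ^ k * g r ∂(Measure.volumeIoiPow (finrank ℝ E - 1)) :=
        integral_prod_mul (fun u : sphere (0 : E) 1 ↦ f u)
          (fun r : Ioi (0 : ℝ) ↦ (r : ℝ) ^ k * g r)
    _ = _ := by
        congr 1
        simp only [Measure.volumeIoiPow, ENNReal.ofReal]
        rw [integral_withDensity_eq_integral_smul
            ((measurable_subtype_coe.pow_const _).real_toNNReal),
          integral_subtype_comap measurableSet_Ioi
            (fun r : ℝ ↦ (r ^ (finrank ℝ E - 1)).toNNReal • (r ^ k * g r))]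
        refine setIntegral_congr_fun measurableSet_Ioi fun r hr ↦ ?_
        rw [NNReal.smul_def, Real.coe_toNNReal _ (pow_nonneg (le_of_lt hr) _), smul_eq_mul,
          pow_add]
        ring

end Polar

theorem integral_Ioi_pow_mul_exp_neg_sq (m : ℕ) :
    ∫ r in Ioi (0 : ℝ), r ^ m * exp (-r ^ 2) = Gamma ((m + 1) / 2) / 2 := by
  have h := integral_rpow_mul_exp_neg_rpow (p := 2) (q := m) two_pos
    (by linarith [(Nat.cast_nonneg m : (0 : ℝ) ≤ m)])
  simp only [rpow_natCast, rpow_two] at h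
  rw [h]
  ring

theorem integral_abs_pow_mul_exp_neg_sq (a : ℕ) :
    ∫ t : ℝ, |t| ^ a * exp (-t ^ 2) = Gamma ((a + 1) / 2) := by
  have h := integral_comp_abs (f := fun t : ℝ ↦ t ^ a * exp (-t ^ 2))
  simp only [sq_abs] at h
  rw [h, integral_Ioi_pow_mul_exp_neg_sq]
  ring

section Moments

variable {ι : Type*} [Fintype ι]

theorem integral_prod_abs_pow_mul_exp_neg_sq_norm (a : ι → ℕ) :
    ∫ x : EuclideanSpace ℝ ι, (∏ i, |x i| ^ a i) * exp (-‖x‖ ^ 2) =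
      ∏ i, Gamma ((a i + 1) / 2) := by
  have hsplit : ∀ y : ι → ℝ, (∏ i, |y i| ^ a i) * exp (-‖WithLp.toLp 2 y‖ ^ 2) =
      ∏ i, |y i| ^ a i * exp (-y i ^ 2) := by
    intro y
    rw [EuclideanSpace.norm_sq_eq, ← Finset.sum_neg_distrib, exp_sum, ← Finset.prod_mul_distrib]
    simp
  rw [← (PiLp.volume_preserving_toLp ι).integral_comp
    (MeasurableEquiv.toLp 2 (ι → ℝ)).measurableEmbedding]
  simp_rw [hsplit]
  rw [volume_pi, integral_fintype_prod_eq_prod (fun _ t ↦ |t| ^ a _ * exp (-t ^ 2))]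
  simp_rw [integral_abs_pow_mul_exp_neg_sq]

theorem integral_prod_abs_pow_toSphere [Nonempty ι] (a : ι → ℕ) :
    ∫ u, ∏ i, |(u : EuclideanSpace ℝ ι) i| ^ a i
        ∂(volume : Measure (EuclideanSpace ℝ ι)).toSphere =
      2 * (∏ i, Gamma ((a i + 1) / 2)) / Gamma ((Fintype.card ι + ∑ i, a i) / 2) := by
  have hhom : ∀ (x : EuclideanSpace ℝ ι) (r : ℝ), 0 < r →
      ∏ i, |(r • x) i| ^ a i = r ^ (∑ i, a i) * ∏ i, |x i| ^ a i := by
    intro x r hr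
    simp only [PiLp.smul_apply, smul_eq_mul, abs_mul, abs_of_pos hr, mul_pow,
      Finset.prod_mul_distrib, Finset.prod_pow_eq_pow_sum]
  have h := integral_mul_fun_norm_of_homogeneous volume
    (f := fun x : EuclideanSpace ℝ ι ↦ ∏ i, |x i| ^ a i) hhom (fun r ↦ exp (-r ^ 2))
  have hdeg : ((Fintype.card ι - 1 + ∑ i, a i : ℕ) : ℝ) + 1 = Fintype.card ι + ∑ i, a i := by
    push_cast [Nat.cast_sub Fintype.card_pos]
    ring
  rw [integral_prod_abs_pow_mul_exp_neg_sq_norm, integral_Ioi_pow_mul_exp_neg_sq,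
    finrank_euclideanSpace, hdeg] at h
  have hΓ : Gamma ((Fintype.card ι + ∑ i, a i) / 2) ≠ 0 := (Gamma_pos_of_pos (by positivity)).ne'
  rw [h]
  field_simp

end Moments

theorem Gamma_three_halves : Gamma (3 / 2) = √π / 2 := by
  rw [show (3 / 2 : ℝ) = 1 / 2 + 1 by norm_num, Gamma_add_one (by norm_num), Gamma_one_half_eq]
  ring

theorem Gamma_five_halves : Gamma (5 / 2) = 3 * √π / 4 := by
  rw [show (5 / 2 : ℝ) = 3 / 2 + 1 by norm_num, Gamma_add_one (by norm_num), Gamma_three_halves]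
  ring

local notation "σ₃" => Measure.toSphere (volume : Measure (EuclideanSpace ℝ (Fin 3)))

theorem toSphere_volume_univ_fin_three : σ₃ univ = ENNReal.ofReal (4 * π) := by
  rw [Measure.toSphere_apply_univ, finrank_euclideanSpace_fin,
    EuclideanSpace.volume_ball_fin_three, ENNReal.ofReal_one, one_pow, one_mul,
    ← ENNReal.ofReal_natCast, ← ENNReal.ofReal_mul (by norm_num)]
  ring_nf

theorem integral_sq_sum_abs_toSphere_fin_three :
    ∫ u, (|(u : EuclideanSpace ℝ (Fin 3)) 0| + |(u : EuclideanSpace ℝ (Fin 3)) 1| +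
      |(u : EuclideanSpace ℝ (Fin 3)) 2|) ^ 2 ∂σ₃ = 4 * π + 16 := by
  set m : (Fin 3 → ℕ) → sphere (0 : EuclideanSpace ℝ (Fin 3)) 1 → ℝ :=
    fun a u ↦ ∏ i, |(u : EuclideanSpace ℝ (Fin 3)) i| ^ a i with hm
  have hint : ∀ a, Integrable (m a) σ₃ := fun a ↦
    (by fun_prop : Continuous (m a)).integrable_of_hasCompactSupport
      (HasCompactSupport.of_compactSpace _)
  have hexpand : ∀ u : sphere (0 : EuclideanSpace ℝ (Fin 3)) 1,
      (|(u : EuclideanSpace ℝ (Fin 3)) 0| + |(u : EuclideanSpace ℝ (Fin 3)) 1| +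
        |(u : EuclideanSpace ℝ (Fin 3)) 2|) ^ 2 =
      m ![0, 0, 0] u + 2 * (m ![1, 1, 0] u + m ![1, 0, 1] u + m ![0, 1, 1] u) := by
    intro u
    have hu : (u : EuclideanSpace ℝ (Fin 3)) 0 ^ 2 + (u : EuclideanSpace ℝ (Fin 3)) 1 ^ 2 +
        (u : EuclideanSpace ℝ (Fin 3)) 2 ^ 2 = 1 := by
      have h := EuclideanSpace.norm_sq_eq (u : EuclideanSpace ℝ (Fin 3))
      rw [mem_sphere_zero_iff_norm.1 u.2] at h
      simpa [Fin.sum_univ_three] using h.symm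
    simp only [hm, Fin.prod_univ_three, Matrix.cons_val_zero, Matrix.cons_val_one,
      Matrix.cons_val, pow_zero, pow_one, mul_one, one_mul]
    linear_combination hu + sq_abs ((u : EuclideanSpace ℝ (Fin 3)) 0) +
      sq_abs ((u : EuclideanSpace ℝ (Fin 3)) 1) + sq_abs ((u : EuclideanSpace ℝ (Fin 3)) 2)
  simp_rw [hexpand]
  rw [integral_add (hint _) ?_, integral_const_mul, integral_add ?_ (hint _),
    integral_add (hint _) (hint _)]
  · simp only [hm, integral_prod_abs_pow_toSphere]
    simp only [Fin.prod_univ_three, Fin.sum_univ_three, Matrix.cons_val_zero,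
      Matrix.cons_val_one, Matrix.cons_val, Fintype.card_fin]
    norm_num [Gamma_one_half_eq, Gamma_three_halves, Gamma_five_halves]
    have hπ : √π ≠ 0 := (sqrt_pos.2 pi_pos).ne'
    field_simp
    linear_combination 12 * sq_sqrt pi_pos.le
  · exact (hint _).add (hint _)
  · exact (((hint _).add (hint _)).add (hint _)).const_mul 2

theorem stmt_6 :
    (∫ u : sphere (0 : EuclideanSpace ℝ (Fin 3)) 1,
        (|(u : EuclideanSpace ℝ (Fin 3)) 0| + |(u : EuclideanSpace ℝ (Fin 3)) 1| +
          |(u : EuclideanSpace ℝ (Fin 3)) 2|) ^ 2 ∂sphereUniform) = 1 + 4 / π := by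
  rw [sphereUniform, integral_smul_measure, integral_sq_sum_abs_toSphere_fin_three,
    toSphere_volume_univ_fin_three, ENNReal.toReal_inv, ENNReal.toReal_ofReal (by positivity),
    smul_eq_mul]
  field_simp
  ring
end
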